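/- arXiv:1908.05875 — 2 statements merged into one kernel-verified Lean document; each statement's English description precedes it below -/
import Mathlib

section
/- (Mathias' theorem for the exponential) For square matrices M, Ṁ ∈ ℝ^{m×m}, the matrix exponential of the block upper triangular matrix [[M, Ṁ],[0, M]] equals [[exp_m(M), D],[0, exp_m(M)]], where D = d/dt|_{t=0} exp_m(M + tṀ) is the directional derivative of the matrix exponential at M in direction Ṁ. -/
open Matrix

open NormedSpace Finset

private lemma sum_succ_aux {R : Type*} [Ring R] (g Md : R) (n : ℕ) :
    ∑ i ∈ Finset.range (n+1), g^i * Md * g^(n-i)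
      = Md * g^n + g * ∑ i ∈ Finset.range n, g^i * Md * g^(n-1-i) := by
  rw [Finset.sum_range_succ', add_comm (Md * g^n), Finset.mul_sum]
  congr 1
  · apply Finset.sum_congr rfl
    intro i _
    have h : n - (i+1) = n - 1 - i := by omega
    rw [h, pow_succ']; rw [mul_assoc g, mul_assoc g]
  · simp

private lemma blockPow_aux {m : ℕ} (M Md : Matrix (Fin m) (Fin m) ℝ) (n : ℕ) :
    (fromBlocks M Md 0 M)^n
      = fromBlocks (M^n) (∑ i ∈ Finset.range n, M^i * Md * M^(n-1-i)) 0 (M^n) := by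
  induction n with
  | zero => simp [Matrix.fromBlocks_one]
  | succ n ih =>
      rw [pow_succ', ih, Matrix.fromBlocks_multiply, pow_succ']
      have h2 : M * ∑ i ∈ Finset.range n, M^i * Md * M^(n-1-i) + Md * M^n
          = ∑ i ∈ Finset.range (n+1), M^i * Md * M^((n+1)-1-i) := by
        simp only [Nat.add_sub_cancel]
        rw [sum_succ_aux, add_comm]
      simp [h2]

private lemma hasDerivAt_pow_path {A : Type*} [NormedRing A] [NormedAlgebra ℝ A]
    (M Md : A) (n : ℕ) (t : ℝ) :
    HasDerivAt (fun s : ℝ => (M + s • Md)^n)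
      (∑ i ∈ Finset.range n, (M + t • Md)^i * Md * (M + t • Md)^(n-1-i)) t := by
  induction n with
  | zero => simpa using hasDerivAt_const t (1 : A)
  | succ n ih =>
      have hg : HasDerivAt (fun s : ℝ => M + s • Md) Md t := by
        simpa using ((hasDerivAt_id t).smul_const Md).const_add M
      have h := hg.mul ih
      simp only [pow_succ'] at h ⊢
      convert h using 1
      · rfl
      rw [Nat.add_sub_cancel, sum_succ_aux]


private lemma summable_u_aux (r C : ℝ) (hr : 0 ≤ r) :
    Summable (fun n : ℕ => ((n.factorial : ℝ))⁻¹ * ((n : ℝ) * r^(n-1) * C)) := by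
  apply (summable_nat_add_iff 1).mp
  have h := (Real.summable_pow_div_factorial r).mul_right C
  apply h.congr
  intro n
  have hf : ((n+1).factorial : ℝ) = (n+1) * (n.factorial : ℝ) := by
    exact_mod_cast Nat.factorial_succ n
  have h0 : (n.factorial : ℝ) ≠ 0 := Nat.cast_ne_zero.mpr n.factorial_ne_zero
  simp only [Nat.add_sub_cancel, hf, Nat.cast_add, Nat.cast_one]
  field_simp

private lemma hasDerivAt_exp_dir {A : Type*} [NormedRing A] [NormedAlgebra ℝ A]
    [CompleteSpace A] [NormOneClass A] (M Md : A) :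
    HasDerivAt (fun t : ℝ => exp (M + t • Md))
      (∑' n : ℕ, ((n.factorial : ℝ))⁻¹ •
        ∑ i ∈ Finset.range n, M^i * Md * M^(n-1-i)) 0 := by
  set r : ℝ := ‖M‖ + ‖Md‖ with hrdef
  have hr : 0 ≤ r := by positivity
  set g : ℕ → ℝ → A := fun n t => ((n.factorial : ℝ))⁻¹ • (M + t • Md)^n with hg
  set g' : ℕ → ℝ → A := fun n t => ((n.factorial : ℝ))⁻¹ •
      ∑ i ∈ Finset.range n, (M + t • Md)^i * Md * (M + t • Md)^(n-1-i) with hg'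
  have hderiv : ∀ n t, HasDerivAt (g n) (g' n t) t := fun n t =>
    (hasDerivAt_pow_path M Md n t).const_smul ((n.factorial : ℝ))⁻¹
  have hbound : ∀ (n : ℕ) (t : ℝ), t ∈ Metric.ball (0:ℝ) 1 →
      ‖g' n t‖ ≤ ((n.factorial : ℝ))⁻¹ * ((n : ℝ) * r^(n-1) * ‖Md‖) := by
    intro n t ht
    have hgt : ‖M + t • Md‖ ≤ r := by
      calc ‖M + t • Md‖ ≤ ‖M‖ + ‖t • Md‖ := norm_add_le _ _
        _ ≤ ‖M‖ + ‖Md‖ := by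
            rw [norm_smul]
            have h1 : ‖t‖ ≤ 1 := le_of_lt (by simpa using ht)
            nlinarith [norm_nonneg Md, norm_nonneg (M:A)]
    have hterm : ∀ i ∈ Finset.range n,
        ‖(M + t • Md)^i * Md * (M + t • Md)^(n-1-i)‖ ≤ r^(n-1) * ‖Md‖ := by
      intro i hi
      have h1 : ‖(M + t • Md)^i * Md * (M + t • Md)^(n-1-i)‖
          ≤ ‖M + t • Md‖^i * ‖Md‖ * ‖M + t • Md‖^(n-1-i) :=
        le_trans (norm_mul_le _ _) (by
          gcongr
          · exact le_trans (norm_mul_le _ _) (by gcongr <;> exact norm_pow_le _ _)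
          · exact norm_pow_le _ _)
      have hin : i + (n - 1 - i) = n - 1 := by
        simp only [Finset.mem_range] at hi; omega
      calc ‖(M + t • Md)^i * Md * (M + t • Md)^(n-1-i)‖
          ≤ ‖M + t • Md‖^i * ‖Md‖ * ‖M + t • Md‖^(n-1-i) := h1
        _ = ‖M + t • Md‖^(n-1) * ‖Md‖ := by rw [mul_right_comm, ← pow_add]; try rw [hin]
        _ ≤ r^(n-1) * ‖Md‖ := by gcongr
    calc ‖g' n t‖ = ((n.factorial : ℝ))⁻¹ *
          ‖∑ i ∈ Finset.range n, (M + t • Md)^i * Md * (M + t • Md)^(n-1-i)‖ := by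
          rw [hg', norm_smul, Real.norm_eq_abs, abs_of_nonneg (by positivity)]
      _ ≤ ((n.factorial : ℝ))⁻¹ * ((n : ℝ) * (r^(n-1) * ‖Md‖)) := by
          gcongr
          refine le_trans (norm_sum_le _ _) ?_
          refine le_trans (Finset.sum_le_sum hterm) ?_
          simp [Finset.sum_const, nsmul_eq_mul]
      _ = ((n.factorial : ℝ))⁻¹ * ((n : ℝ) * r^(n-1) * ‖Md‖) := by ring
  have hg0 : Summable fun n => g n 0 := by
    simpa [hg] using expSeries_summable' (𝕂 := ℝ) M
  have key := hasDerivAt_tsum_of_isPreconnected (summable_u_aux r ‖Md‖ hr)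
    Metric.isOpen_ball ((convex_ball (0:ℝ) 1).isPreconnected)
    (fun n y _ => hderiv n y) hbound (Metric.mem_ball_self one_pos) hg0 (Metric.mem_ball_self one_pos)
  have hfun : (fun t : ℝ => exp (M + t • Md)) = fun z => ∑' n, g n z := by
    funext z
    rw [exp_eq_tsum ℝ]
  have hval : (∑' n, g' n 0) = ∑' n : ℕ, ((n.factorial : ℝ))⁻¹ •
      ∑ i ∈ Finset.range n, M^i * Md * M^(n-1-i) := by
    congr 1
    funext n
    simp [hg']
  rw [hfun, ← hval]
  exact key

/-- Mathias' theorem for the matrix exponential: the exponential of the block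
upper triangular matrix `[[M, Ṁ],[0, M]]` is `[[exp M, D],[0, exp M]]`, where
`D` is the directional (Fréchet) derivative of `exp` at `M` in direction `Ṁ`. -/
theorem mathias_theorem_exp (m : ℕ) (M Mdot : Matrix (Fin m) (Fin m) ℝ)
    (D : Matrix (Fin m) (Fin m) ℝ)
    (hD : ∀ i j, HasDerivAt (fun t : ℝ => NormedSpace.exp (M + t • Mdot) i j) (D i j) 0) :
    NormedSpace.exp (Matrix.fromBlocks M Mdot 0 M)
      = Matrix.fromBlocks (NormedSpace.exp M) D 0 (NormedSpace.exp M) := by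
  rcases Nat.eq_zero_or_pos m with hm | hm
  · subst hm
    ext i j
    exact i.elim (fun x => x.elim0) (fun x => x.elim0)
  haveI : Nonempty (Fin m) := ⟨⟨0, hm⟩⟩
  letI : NormedRing (Matrix (Fin m) (Fin m) ℝ) := Matrix.linftyOpNormedRing
  letI : NormedAlgebra ℝ (Matrix (Fin m) (Fin m) ℝ) := Matrix.linftyOpNormedAlgebra
  letI : NormOneClass (Matrix (Fin m) (Fin m) ℝ) := Matrix.linfty_opNormOneClass
  letI : NormedRing (Matrix (Fin m ⊕ Fin m) (Fin m ⊕ Fin m) ℝ) := Matrix.linftyOpNormedRing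
  letI : NormedAlgebra ℝ (Matrix (Fin m ⊕ Fin m) (Fin m ⊕ Fin m) ℝ) :=
    Matrix.linftyOpNormedAlgebra
  set B := fromBlocks M Mdot 0 M with hB
  set S : ℕ → Matrix (Fin m) (Fin m) ℝ :=
    fun n => ∑ i ∈ Finset.range n, M^i * Mdot * M^(n-1-i) with hS
  have hBig : HasSum (fun n : ℕ => ((n.factorial : ℝ))⁻¹ • B ^ n) (exp B) :=
    exp_series_hasSum_exp' B
  have hpow : ∀ n : ℕ, ((n.factorial : ℝ))⁻¹ • B ^ n
      = fromBlocks (((n.factorial : ℝ))⁻¹ • M^n) (((n.factorial : ℝ))⁻¹ • S n) 0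
          (((n.factorial : ℝ))⁻¹ • M^n) := by
    intro n
    rw [hB, blockPow_aux, Matrix.fromBlocks_smul, smul_zero]
  -- continuous additive block projections
  have cont11 : Continuous
      (Matrix.toBlocks₁₁ : Matrix (Fin m ⊕ Fin m) (Fin m ⊕ Fin m) ℝ → _) := by
    apply continuous_matrix
    intro i j
    show Continuous fun x : Matrix (Fin m ⊕ Fin m) (Fin m ⊕ Fin m) ℝ => x (Sum.inl i) (Sum.inl j)
    exact (continuous_apply (Sum.inl j)).comp (continuous_apply (Sum.inl i))
  have cont12 : Continuous
      (Matrix.toBlocks₁₂ : Matrix (Fin m ⊕ Fin m) (Fin m ⊕ Fin m) ℝ → _) := by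
    apply continuous_matrix
    intro i j
    show Continuous fun x : Matrix (Fin m ⊕ Fin m) (Fin m ⊕ Fin m) ℝ => x (Sum.inl i) (Sum.inr j)
    exact (continuous_apply (Sum.inr j)).comp (continuous_apply (Sum.inl i))
  have cont21 : Continuous
      (Matrix.toBlocks₂₁ : Matrix (Fin m ⊕ Fin m) (Fin m ⊕ Fin m) ℝ → _) := by
    apply continuous_matrix
    intro i j
    show Continuous fun x : Matrix (Fin m ⊕ Fin m) (Fin m ⊕ Fin m) ℝ => x (Sum.inr i) (Sum.inl j)
    exact (continuous_apply (Sum.inl j)).comp (continuous_apply (Sum.inr i))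
  have cont22 : Continuous
      (Matrix.toBlocks₂₂ : Matrix (Fin m ⊕ Fin m) (Fin m ⊕ Fin m) ℝ → _) := by
    apply continuous_matrix
    intro i j
    show Continuous fun x : Matrix (Fin m ⊕ Fin m) (Fin m ⊕ Fin m) ℝ => x (Sum.inr i) (Sum.inr j)
    exact (continuous_apply (Sum.inr j)).comp (continuous_apply (Sum.inr i))
  have h11 : HasSum (fun n : ℕ => ((n.factorial : ℝ))⁻¹ • M ^ n) ((exp B).toBlocks₁₁) := by
    have := hBig.map (AddMonoidHom.mk' _ (fun _ _ => rfl)) cont11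
    convert this using 1
    funext n
    exact ((congrArg Matrix.toBlocks₁₁ (hpow n)).trans
      (Matrix.toBlocks_fromBlocks₁₁ ..)).symm
    rfl
  have h12 : HasSum (fun n : ℕ => ((n.factorial : ℝ))⁻¹ • S n) ((exp B).toBlocks₁₂) := by
    have := hBig.map (AddMonoidHom.mk' _ (fun _ _ => rfl)) cont12
    convert this using 1
    funext n
    exact ((congrArg Matrix.toBlocks₁₂ (hpow n)).trans
      (Matrix.toBlocks_fromBlocks₁₂ ..)).symm
    rfl
  have h21 : (exp B).toBlocks₂₁ = 0 := by
    have := hBig.map (AddMonoidHom.mk' _ (fun _ _ => rfl)) cont21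
    have h0 : HasSum (fun _ : ℕ => (0 : Matrix (Fin m) (Fin m) ℝ)) ((exp B).toBlocks₂₁) := by
      convert this using 1
      funext n
      exact ((congrArg Matrix.toBlocks₂₁ (hpow n)).trans
        (Matrix.toBlocks_fromBlocks₂₁ ..)).symm
      rfl
    exact h0.unique hasSum_zero
  have h22 : (exp B).toBlocks₂₂ = exp M := by
    have := hBig.map (AddMonoidHom.mk' _ (fun _ _ => rfl)) cont22
    have h' : HasSum (fun n : ℕ => ((n.factorial : ℝ))⁻¹ • M ^ n) ((exp B).toBlocks₂₂) := by
      convert this using 1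
      funext n
      exact ((congrArg Matrix.toBlocks₂₂ (hpow n)).trans
        (Matrix.toBlocks_fromBlocks₂₂ ..)).symm
      rfl
    exact h'.unique (exp_series_hasSum_exp' M)
  have hexp11 : (exp B).toBlocks₁₁ = exp M := h11.unique (exp_series_hasSum_exp' M)
  -- identify D with the 1-2 block
  have hder := hasDerivAt_exp_dir M Mdot
  have htsum : (∑' n : ℕ, ((n.factorial : ℝ))⁻¹ • S n) = (exp B).toBlocks₁₂ := h12.tsum_eq
  have hDeq : D = (exp B).toBlocks₁₂ := by
    ext i j
    refine (hD i j).unique ?_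
    let e : Matrix (Fin m) (Fin m) ℝ →L[ℝ] ℝ :=
      { toFun := fun A => A i j
        map_add' := fun _ _ => rfl
        map_smul' := fun _ _ => rfl
        cont := (continuous_apply j).comp (continuous_apply i) }
    have := e.hasFDerivAt.comp_hasDerivAt 0 hder
    rw [← htsum]
    exact this
  rw [← Matrix.fromBlocks_toBlocks (exp B), hexp11, h21, h22, hDeq]
end

section
/- Let T(t) = Q(t)R(t) be a differentiable QR decomposition (Q(t)ᵀQ(t) = I_r and R(t) upper triangular). Then at any t: (i) X := QᵀQ̇ is skew-symmetric, (ii) Ṙ R is related by Ṫ = Q̇R + QṘ, and (iii) if R is invertible, Q̇ = (I - QQᵀ)Ṫ R^{-1} + QX and Ṙ = QᵀṪ - XR, where X = L - Lᵀ with L the strictly lower triangular part of QᵀṪR^{-1}. -/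
open Matrix

theorem qr_decomposition_derivative (n r : ℕ) (t₀ : ℝ)
    (Q : ℝ → Matrix (Fin n) (Fin r) ℝ) (R : ℝ → Matrix (Fin r) (Fin r) ℝ)
    (Qd : Matrix (Fin n) (Fin r) ℝ) (Rd : Matrix (Fin r) (Fin r) ℝ)
    (horth : ∀ t, (Q t)ᵀ * Q t = 1)
    (hupper : ∀ t, ∀ i j : Fin r, j < i → R t i j = 0)
    (hQd : ∀ i j, HasDerivAt (fun t => Q t i j) (Qd i j) t₀)
    (hRd : ∀ i j, HasDerivAt (fun t => R t i j) (Rd i j) t₀)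
    (hinv : IsUnit (R t₀))
    (Td : Matrix (Fin n) (Fin r) ℝ) (hTd : Td = Qd * R t₀ + Q t₀ * Rd)
    (L : Matrix (Fin r) (Fin r) ℝ)
    (hL : L = Matrix.of fun i j : Fin r =>
      if j < i then ((Q t₀)ᵀ * Td * (R t₀)⁻¹) i j else 0)
    (X : Matrix (Fin r) (Fin r) ℝ) (hX : X = L - Lᵀ) :
    -- (i) QᵀQ̇ is skew-symmetric
    ((Q t₀)ᵀ * Qd)ᵀ = -((Q t₀)ᵀ * Qd) ∧
    -- (ii) product rule: Ṫ = Q̇R + QṘ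
    (∀ i j, HasDerivAt (fun t => (Q t * R t) i j) (Td i j) t₀) ∧
    -- (iii) recovery formulas
    X = (Q t₀)ᵀ * Qd ∧
    Qd = (1 - Q t₀ * (Q t₀)ᵀ) * Td * (R t₀)⁻¹ + Q t₀ * X ∧
    Rd = (Q t₀)ᵀ * Td - X * R t₀ := by
  have hQ0 := horth t₀
  set S := (Q t₀)ᵀ * Qd with hSdef
  -- skew symmetry
  have hskew : Qdᵀ * Q t₀ + S = 0 := by
    ext i j
    have h1 : HasDerivAt (fun t => ∑ k, Q t k i * Q t k j)
        (∑ k, (Qd k i * Q t₀ k j + Q t₀ k i * Qd k j)) t₀ :=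
      HasDerivAt.fun_sum fun k _ => (hQd k i).mul (hQd k j)
    have h2 : HasDerivAt (fun t => ∑ k, Q t k i * Q t k j) 0 t₀ := by
      have e : (fun t => ∑ k, Q t k i * Q t k j)
          = fun _ => (1 : Matrix (Fin r) (Fin r) ℝ) i j := by
        funext t
        rw [← horth t]
        simp [Matrix.mul_apply]
      rw [e]; exact hasDerivAt_const _ _
    have key := h1.unique h2
    simpa [hSdef, Matrix.add_apply, Matrix.mul_apply, Matrix.transpose_apply,
      Finset.sum_add_distrib] using key
  have hSt : Sᵀ = -S := by
    rw [hSdef, Matrix.transpose_mul, Matrix.transpose_transpose]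
    exact eq_neg_of_add_eq_zero_left hskew
  have hSkw : ∀ a b : Fin r, S b a = -S a b := by
    intro a b
    have : Sᵀ a b = (-S) a b := by rw [hSt]
    simpa using this
  -- product rule
  have hprodr : ∀ i j, HasDerivAt (fun t => (Q t * R t) i j) (Td i j) t₀ := by
    intro i j
    have h1 : HasDerivAt (fun t => ∑ k, Q t i k * R t k j)
        (∑ k, (Qd i k * R t₀ k j + Q t₀ i k * Rd k j)) t₀ :=
      HasDerivAt.fun_sum fun k _ => (hQd i k).mul (hRd k j)
    have e : Td i j = ∑ k, (Qd i k * R t₀ k j + Q t₀ i k * Rd k j) := by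
      simp [hTd, Matrix.add_apply, Matrix.mul_apply, Finset.sum_add_distrib]
    rw [e]
    simpa only [Matrix.mul_apply] using h1
  -- Rd is upper triangular
  have hRdu : ∀ i j : Fin r, j < i → Rd i j = 0 := by
    intro i j hij
    have h2 : HasDerivAt (fun t => R t i j) 0 t₀ := by
      have e : (fun t => R t i j) = fun _ => (0 : ℝ) :=
        funext fun t => hupper t i j hij
      rw [e]; exact hasDerivAt_const _ _
    exact (hRd i j).unique h2
  have hdet : IsUnit (R t₀).det := (Matrix.isUnit_iff_isUnit_det _).mp hinv
  have hRR : R t₀ * (R t₀)⁻¹ = 1 := Matrix.mul_nonsing_inv _ hdet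
  haveI : Invertible (R t₀) := hinv.invertible
  have hRtri : BlockTriangular (R t₀) id := fun i j h => hupper t₀ i j h
  have hRinvtri : BlockTriangular (R t₀)⁻¹ id :=
    blockTriangular_inv_of_blockTriangular hRtri
  have hRdtri : BlockTriangular Rd id := fun i j h => hRdu i j h
  have hprod : BlockTriangular (Rd * (R t₀)⁻¹) id := hRdtri.mul hRinvtri
  -- key algebraic identities
  have hQTd : (Q t₀)ᵀ * Td = S * R t₀ + Rd := by
    rw [hTd, Matrix.mul_add, ← Matrix.mul_assoc, ← Matrix.mul_assoc, hQ0,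
      Matrix.one_mul, hSdef]
  have hM : (Q t₀)ᵀ * Td * (R t₀)⁻¹ = S + Rd * (R t₀)⁻¹ := by
    rw [hQTd, Matrix.add_mul, Matrix.mul_assoc, hRR, Matrix.mul_one]
  have hTdR : Td * (R t₀)⁻¹ = Qd + Q t₀ * (Rd * (R t₀)⁻¹) := by
    rw [hTd, Matrix.add_mul, Matrix.mul_assoc, hRR, Matrix.mul_one,
      Matrix.mul_assoc]
  -- X = S
  have hXS : X = S := by
    rw [hX, hL]
    ext i j
    simp only [Matrix.sub_apply, Matrix.transpose_apply, Matrix.of_apply]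
    rcases lt_trichotomy i j with h | h | h
    · rw [if_neg (asymm h), if_pos h, hM, Matrix.add_apply, hprod h, add_zero,
        hSkw i j]
      ring
    · subst h
      have := hSkw i i
      simp only [lt_irrefl, if_false]
      linarith
    · rw [if_pos h, if_neg (asymm h), hM, Matrix.add_apply, hprod h, add_zero]
      ring
  refine ⟨hSt, hprodr, hXS, ?_, ?_⟩
  · rw [hXS]
    have e1 : (1 - Q t₀ * (Q t₀)ᵀ) * Td * (R t₀)⁻¹
        = Td * (R t₀)⁻¹ - Q t₀ * ((Q t₀)ᵀ * Td * (R t₀)⁻¹) := by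
      rw [Matrix.sub_mul, Matrix.sub_mul, Matrix.one_mul]
      simp only [Matrix.mul_assoc]
    rw [e1, hM, hTdR, Matrix.mul_add]
    abel
  · rw [hXS, hQTd]
    abel
end
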